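/- arXiv:2305.14089 — 6 statements merged into one kernel-verified Lean document; each statement's English description precedes it below -/
import Mathlib

section
/- Let k be a field, R an ℕ-graded commutative k-algebra (with R₀ ≅ k, finitely generated, finite-dimensional graded pieces), and suppose θ₁,…,θ_r is a regular sequence of homogeneous positive-degree elements of R. If (v_λ)_{λ∈Λ} is a family of homogeneous elements of R whose images in R/(θ₁,…,θ_r) form a basis of R/(θ₁,…,θ_r) as a k-vector space, then (v_λ)_{λ∈Λ} is a basis of R as a module over the k-subalgebra k[θ₁,…,θ_r] generated by θ₁,…,θ_r. -/
/-- A sequence `θ 0, …, θ (r-1)` of elements of a commutative ring `R` is a regular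
sequence if for each `j` the image of `θ j` in the quotient `R ⧸ (θ 0, …, θ (j-1))`
is a non-zero-divisor, i.e. it is nonzero and multiplication by it is injective. -/
def IsRegularSeq {R : Type*} [CommRing R] {r : ℕ} (θ : Fin r → R) : Prop :=
  ∀ j : Fin r,
    Ideal.Quotient.mk (Ideal.span (θ '' {i | i < j})) (θ j) ≠ 0 ∧
      Function.Injective fun x : R ⧸ Ideal.span (θ '' {i | i < j}) =>
        Ideal.Quotient.mk (Ideal.span (θ '' {i | i < j})) (θ j) * x

/-!
Write `A = k[θ]` and `Φ : (Λ →₀ A) → R` for `b ↦ ∑ b_l v_l`. Both halves are graded Nakayama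
arguments: if `X ⊆ Y + ∑ θ_j X` and every homogeneous component of every element of `Y` lies in
a subspace `V` stable under the `θ_j`, then `X ⊆ V`, by induction on the degree since
`deg θ_j > 0`. For spanning take `X = R` and `Y = span_k v`, using `R = span_k v + (θ)`.
For independence take `V = 0` and `X` the set of coefficients of relations `b ∈ ker Φ`: modulo
`(θ)` the constant terms of `b` vanish, so `b = ∑ θ_j t_j`; then `(Φ t_j)_j` is a relation among
the `θ_j`, hence a Koszul boundary because `θ` is regular, and lifting that boundary along the
surjection `Φ` rewrites `b` as `∑ θ_j z_j` with every `z_j ∈ ker Φ`.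
-/

section Koszul

variable {S M N : Type*} [CommRing S] [AddCommGroup M] [Module S M] [AddCommGroup N] [Module S N]
  {ι : Type*} [Fintype ι]

/-- The Koszul differential `K₂ → K₁` of `θ`, a matrix `c` standing for the 2-chain
`∑ c i j • eᵢ ∧ eⱼ`. -/
def koszulBoundary (θ : ι → S) : (ι → ι → M) →ₗ[S] ι → M where
  toFun c j := ∑ i, θ i • (c i j - c j i)
  map_add' c c' := by
    ext j
    simp only [Pi.add_apply, ← Finset.sum_add_distrib, ← smul_add]
    congr! 2
    abel
  map_smul' a c := by
    ext j
    simp only [Pi.smul_apply, RingHom.id_apply, Finset.smul_sum, ← smul_sub, smul_comm a]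

variable (θ : ι → S)

theorem koszulBoundary_apply (c : ι → ι → M) (j : ι) :
    koszulBoundary θ c j = ∑ i, θ i • (c i j - c j i) := rfl

theorem sum_smul_koszulBoundary (c : ι → ι → M) : ∑ j, θ j • koszulBoundary θ c j = 0 := by
  simp only [koszulBoundary_apply, Finset.smul_sum, smul_sub, Finset.sum_sub_distrib, smul_smul]
  rw [Finset.sum_comm, sub_eq_zero]
  simp only [mul_comm]

theorem LinearMap.map_koszulBoundary (f : M →ₗ[S] N) (c : ι → ι → M) (j : ι) :
    f (koszulBoundary θ c j) = koszulBoundary θ (fun i j => f (c i j)) j := by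
  simp [koszulBoundary_apply]

theorem koszulBoundary_ite [DecidableEq ι] (a : ι → M) (j₀ j : ι) :
    koszulBoundary θ (fun i j => if j = j₀ then a i else 0) j =
      (if j = j₀ then ∑ i, θ i • a i else 0) - θ j₀ • a j := by
  simp only [koszulBoundary_apply, smul_sub, Finset.sum_sub_distrib, smul_ite, smul_zero]
  congr 1
  · split_ifs <;> simp
  · simp

end Koszul

namespace IsRegularSeq

variable {R : Type*} [CommRing R] {r : ℕ} {θ : Fin r → R}

theorem mem_span_of_mul_mem (hreg : IsRegularSeq θ) {j : Fin r} {x : R}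
    (hx : θ j * x ∈ Ideal.span (θ '' {i | i < j})) : x ∈ Ideal.span (θ '' {i | i < j}) := by
  rw [← Ideal.Quotient.eq_zero_iff_mem] at hx ⊢
  exact (hreg j).2 (by simpa using hx)

theorem mem_range_koszulBoundary_of_forall_le (hreg : IsRegularSeq θ) (s : ℕ) {w : Fin r → R}
    (hws : ∀ j : Fin r, s ≤ j → w j = 0) (hw : ∑ j, θ j • w j = 0) :
    w ∈ LinearMap.range (koszulBoundary θ) := by
  induction s generalizing w with
  | zero =>
    rw [show w = 0 from funext fun j => hws j j.val.zero_le]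
    exact zero_mem _
  | succ s ih =>
    by_cases hs : s < r
    swap
    · exact ih (fun j hj => absurd j.isLt (by omega)) hw
    set j₀ : Fin r := ⟨s, hs⟩
    -- Regularity puts `w j₀` in `(θ i)_{i < j₀}`; subtracting the boundary of the
    -- corresponding column `c₀` then kills the entry at `j₀`.
    have hmem : w j₀ ∈ Ideal.span (θ '' {i | i < j₀}) := by
      refine hreg.mem_span_of_mul_mem ?_
      rw [← Ideal.Quotient.eq_zero_iff_mem]
      have hterm : ∀ j ≠ j₀,
          Ideal.Quotient.mk (Ideal.span (θ '' {i | i < j₀})) (θ j * w j) = 0 := fun j hj => by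
        rcases lt_or_gt_of_ne hj with hlt | hgt
        · rw [Ideal.Quotient.eq_zero_iff_mem]
          exact Ideal.mul_mem_right _ _ (Ideal.subset_span ⟨j, hlt, rfl⟩)
        · rw [hws j hgt, mul_zero, map_zero]
      rw [← Finset.sum_eq_single_of_mem j₀ (Finset.mem_univ _) fun j _ hj => hterm j hj,
        ← map_sum, show ∑ j, θ j * w j = 0 by simpa using hw, map_zero]
    obtain ⟨a, ha, hsum⟩ := (Finsupp.mem_span_image_iff_linearCombination R).mp hmem
    have ha : ∀ i, ¬ i < j₀ → a i = 0 := fun i hi =>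
      Finsupp.notMem_support_iff.mp fun h => hi (ha h)
    rw [Finsupp.linearCombination_apply, Finsupp.sum_fintype _ _ (by simp)] at hsum
    set c₀ : Fin r → Fin r → R := fun i j => if j = j₀ then a i else 0
    have hw' : w - koszulBoundary θ c₀ ∈ LinearMap.range (koszulBoundary θ) := by
      refine ih (fun j hj => ?_) ?_
      · have hj₀ : ¬ j < j₀ := not_lt.mpr hj
        rw [Pi.sub_apply, koszulBoundary_ite, ha j hj₀, smul_zero, sub_zero]
        split_ifs with h
        · simp [h, ← hsum, mul_comm]
        · have hjs : (j : ℕ) ≠ s := fun h' => h (Fin.ext h')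
          rw [hws j (by omega), sub_zero]
      · simp only [Pi.sub_apply, smul_sub, Finset.sum_sub_distrib, hw, sum_smul_koszulBoundary,
          sub_zero]
    simpa only [sub_add_cancel] using add_mem hw' (LinearMap.mem_range_self _ c₀)

theorem mem_range_koszulBoundary (hreg : IsRegularSeq θ) {w : Fin r → R} (hw : ∑ j, θ j • w j = 0) :
    w ∈ LinearMap.range (koszulBoundary θ) :=
  hreg.mem_range_koszulBoundary_of_forall_le r (fun j hj => absurd j.isLt (not_lt.mpr hj)) hw

end IsRegularSeq

section Adjoin

variable (k : Type*) {R ι : Type*} [CommSemiring k] [CommSemiring R] [Algebra k R]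
  (θ : ι → R)

def adjoinRangeGen (j : ι) : Algebra.adjoin k (Set.range θ) :=
  ⟨θ j, Algebra.subset_adjoin (Set.mem_range_self j)⟩

variable {k θ}

@[simp]
theorem coe_adjoinRangeGen (j : ι) : (adjoinRangeGen k θ j : R) = θ j := rfl

@[simp]
theorem adjoinRangeGen_smul (j : ι) (x : R) : adjoinRangeGen k θ j • x = θ j * x := rfl

variable [Fintype ι]

theorem exists_eq_algebraMap_add_sum_mul_of_mem_adjoin {x : R}
    (hx : x ∈ Algebra.adjoin k (Set.range θ)) :
    ∃ (c : k) (t : ι → Algebra.adjoin k (Set.range θ)),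
      x = algebraMap k R c + ∑ j, θ j * t j := by
  classical
  induction hx using Algebra.adjoin_induction with
  | mem x hx =>
    obtain ⟨i, rfl⟩ := hx
    exact ⟨0, Pi.single i 1, by simp [Pi.single_apply, apply_ite Subtype.val]⟩
  | algebraMap c => exact ⟨c, 0, by simp⟩
  | add x y _ _ hx hy =>
    obtain ⟨c, t, rfl⟩ := hx
    obtain ⟨c', t', rfl⟩ := hy
    exact ⟨c + c', t + t', by simp [mul_add, Finset.sum_add_distrib]; ring⟩
  | mul x y _ hy hx hy' =>
    obtain ⟨c, t, rfl⟩ := hx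
    obtain ⟨c', t', hy'⟩ := hy'
    refine ⟨c * c', fun j => algebraMap k _ c * t' j + t j * ⟨y, hy⟩, ?_⟩
    have hsum : ∑ j, θ j * ↑(algebraMap k _ c * t' j + t j * ⟨y, hy⟩) =
        algebraMap k R c * ∑ j, θ j * t' j + (∑ j, θ j * t j) * y := by
      simp only [Subalgebra.coe_add, Subalgebra.coe_mul, Subalgebra.coe_algebraMap, mul_add,
        Finset.sum_add_distrib, Finset.mul_sum, Finset.sum_mul, mul_left_comm, mul_assoc]
    rw [hsum, map_mul, add_mul, hy']
    ring

theorem Finsupp.exists_eq_mapRange_algebraMap_add_sum_smul {Λ : Type*}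
    (b : Λ →₀ Algebra.adjoin k (Set.range θ)) :
    ∃ (c : Λ →₀ k) (t : ι → Λ →₀ Algebra.adjoin k (Set.range θ)),
      b = c.mapRange (algebraMap k _) (map_zero _) + ∑ j, adjoinRangeGen k θ j • t j := by
  induction b using Finsupp.induction_linear with
  | zero => exact ⟨0, 0, by simp⟩
  | add b b' hb hb' =>
    obtain ⟨c, t, rfl⟩ := hb
    obtain ⟨c', t', rfl⟩ := hb'
    refine ⟨c + c', t + t', ?_⟩
    simp only [Finsupp.mapRange_add (map_add _), Pi.add_apply, smul_add, Finset.sum_add_distrib]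
    abel
  | single l x =>
    obtain ⟨c, t, hx⟩ := exists_eq_algebraMap_add_sum_mul_of_mem_adjoin x.2
    refine ⟨Finsupp.single l c, fun j => Finsupp.single l (t j), ?_⟩
    simp only [Finsupp.mapRange_single, Finsupp.smul_single, ← Finsupp.single_finsetSum,
      ← Finsupp.single_add]
    congr 1
    exact Subtype.ext (by simpa [adjoinRangeGen] using hx)

end Adjoin

section Relations

variable {k R Λ : Type*} [CommRing k] [CommRing R] [Algebra k R] {r : ℕ} {θ : Fin r → R}
  {v : Λ → R}

theorem exists_eq_sum_smul_of_linearCombination_eq_zero (hreg : IsRegularSeq θ)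
    (hli : LinearIndependent k fun l => Ideal.Quotient.mk (Ideal.span (Set.range θ)) (v l))
    (hspan : Submodule.span (Algebra.adjoin k (Set.range θ)) (Set.range v) = ⊤)
    {b : Λ →₀ Algebra.adjoin k (Set.range θ)}
    (hb : Finsupp.linearCombination _ v b = 0) :
    ∃ z : Fin r → Λ →₀ Algebra.adjoin k (Set.range θ),
      (∀ j, Finsupp.linearCombination _ v (z j) = 0) ∧
        b = ∑ j, adjoinRangeGen k θ j • z j := by
  obtain ⟨c, t, rfl⟩ := Finsupp.exists_eq_mapRange_algebraMap_add_sum_smul b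
  have hmapRange : Finsupp.linearCombination _ v
      (c.mapRange (algebraMap k (Algebra.adjoin k (Set.range θ))) (map_zero _)) =
      Finsupp.linearCombination k v c := by
    simp [Finsupp.linearCombination_apply, Finsupp.sum_mapRange_index, algebraMap_smul]
  simp only [map_add, map_sum, map_smul, adjoinRangeGen_smul, hmapRange] at hb
  have hc : c = 0 := by
    refine linearIndependent_iff.mp hli c ?_
    rw [show (fun l => Ideal.Quotient.mk _ (v l)) =
      (Ideal.Quotient.mkₐ k (Ideal.span (Set.range θ))).toLinearMap ∘ v from rfl,
      ← Finsupp.apply_linearCombination]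
    simpa using congrArg (Ideal.Quotient.mkₐ k (Ideal.span (Set.range θ))) hb
  subst hc
  obtain ⟨C, hC⟩ := hreg.mem_range_koszulBoundary
    (w := fun j => Finsupp.linearCombination _ v (t j)) (by simpa using hb)
  have hsurj : Function.Surjective (Finsupp.linearCombination (Algebra.adjoin k (Set.range θ)) v) :=
    LinearMap.range_eq_top.mp (by rw [Finsupp.range_linearCombination, hspan])
  choose D hD using fun i j => hsurj (C i j)
  refine ⟨fun j => t j - koszulBoundary (adjoinRangeGen k θ) D j, fun j => ?_, ?_⟩
  · rw [map_sub, LinearMap.map_koszulBoundary, sub_eq_zero, ← congrFun hC j]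
    simp [hD, koszulBoundary_apply]
  · simp [smul_sub, sum_smul_koszulBoundary]

end Relations

namespace GradedAlgebra

variable {k R : Type*} [CommSemiring k] [Semiring R] [Algebra k R]
  (𝒜 : ℕ → Submodule k R) [GradedAlgebra 𝒜]

theorem mem_of_forall_proj_mem {V : Submodule k R} {x : R} (h : ∀ n, proj 𝒜 n x ∈ V) :
    x ∈ V := by
  classical
  rw [← DirectSum.sum_support_decompose 𝒜 x]
  exact sum_mem fun n _ => h n

theorem subset_of_forall_eq_add_sum_mul {ι : Type*} [Fintype ι] {θ : ι → R} {d : ι → ℕ}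
    (hd : ∀ j, 0 < d j) (hθ : ∀ j, θ j ∈ 𝒜 (d j)) {V : Submodule k R}
    (hV : ∀ j, ∀ x ∈ V, θ j * x ∈ V) {X : Set R}
    (hX : ∀ x ∈ X, ∃ (y : R) (t : ι → R),
      (∀ n, proj 𝒜 n y ∈ V) ∧ (∀ j, t j ∈ X) ∧ x = y + ∑ j, θ j * t j) :
    X ⊆ (V : Set R) := by
  suffices hproj : ∀ n, ∀ x ∈ X, proj 𝒜 n x ∈ V from
    fun x hx => mem_of_forall_proj_mem 𝒜 fun n => hproj n x hx
  intro n
  induction n using Nat.strong_induction_on with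
  | _ n ih =>
  intro x hx
  obtain ⟨y, t, hy, ht, rfl⟩ := hX x hx
  rw [map_add, map_sum]
  refine add_mem (hy n) (sum_mem fun j _ => ?_)
  rw [proj_apply, DirectSum.coe_decompose_mul_of_left_mem 𝒜 n (hθ j)]
  split_ifs with hj
  · exact hV j _ (ih (n - d j) (by have := hd j; omega) _ (ht j))
  · exact zero_mem _

end GradedAlgebra

section Basis

variable {k R Λ : Type*} [CommRing k] [CommRing R] [Algebra k R]
  (𝒜 : ℕ → Submodule k R) [GradedAlgebra 𝒜] {r : ℕ} {θ : Fin r → R} {d : Fin r → ℕ}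
  {v : Λ → R}

theorem span_adjoin_eq_top (hd : ∀ j, 0 < d j) (hθ : ∀ j, θ j ∈ 𝒜 (d j)) {e : Λ → ℕ}
    (hv : ∀ l, v l ∈ 𝒜 (e l))
    (hspan : Submodule.span k
      (Set.range fun l => Ideal.Quotient.mk (Ideal.span (Set.range θ)) (v l)) = ⊤) :
    Submodule.span (Algebra.adjoin k (Set.range θ)) (Set.range v) = ⊤ := by
  set V := (Submodule.span (Algebra.adjoin k (Set.range θ)) (Set.range v)).restrictScalars k
  have hV : ∀ j, ∀ x ∈ V, θ j * x ∈ V := fun j x hx =>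
    Submodule.smul_mem (Submodule.span _ (Set.range v)) (adjoinRangeGen k θ j) hx
  have hproj : ∀ y ∈ Submodule.span k (Set.range v), ∀ n, GradedAlgebra.proj 𝒜 n y ∈ V := by
    intro y hy n
    refine (Submodule.span_le (p := V.comap (GradedAlgebra.proj 𝒜 n)) |>.mpr ?_ hy)
    rintro _ ⟨l, rfl⟩
    rw [SetLike.mem_coe, Submodule.mem_comap, GradedAlgebra.proj_apply]
    by_cases hl : e l = n
    · rw [← hl, DirectSum.decompose_of_mem_same 𝒜 (hv l)]
      exact Submodule.subset_span ⟨l, rfl⟩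
    · rw [DirectSum.decompose_of_mem_ne 𝒜 (hv l) hl]
      exact zero_mem _
  have hX : ∀ x ∈ Set.univ, ∃ (y : R) (t : Fin r → R), (∀ n, GradedAlgebra.proj 𝒜 n y ∈ V) ∧
      (∀ j, t j ∈ Set.univ) ∧ x = y + ∑ j, θ j * t j := by
    intro x _
    have hx : Ideal.Quotient.mkₐ k (Ideal.span (Set.range θ)) x ∈
        (Submodule.span k (Set.range v)).map (Ideal.Quotient.mkₐ k _).toLinearMap := by
      rw [Submodule.map_span, ← Set.range_comp]
      exact hspan ▸ Submodule.mem_top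
    obtain ⟨y, hy, hyx⟩ := hx
    obtain ⟨t, ht⟩ := Ideal.mem_span_range_iff_exists_fun.mp
      (Ideal.Quotient.eq.mp (by simpa using hyx.symm))
    exact ⟨y, t, hproj y hy, fun _ => trivial, by rw [← sub_eq_iff_eq_add', ← ht]; simp [mul_comm]⟩
  exact Submodule.eq_top_iff'.mpr fun x =>
    GradedAlgebra.subset_of_forall_eq_add_sum_mul 𝒜 hd hθ hV hX (Set.mem_univ x)

theorem linearIndependent_adjoin (hd : ∀ j, 0 < d j) (hθ : ∀ j, θ j ∈ 𝒜 (d j))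
    (hreg : IsRegularSeq θ)
    (hli : LinearIndependent k fun l => Ideal.Quotient.mk (Ideal.span (Set.range θ)) (v l))
    (hspan : Submodule.span (Algebra.adjoin k (Set.range θ)) (Set.range v) = ⊤) :
    LinearIndependent (Algebra.adjoin k (Set.range θ)) v := by
  refine linearIndependent_iff.mpr fun b hb => ?_
  set X := {x : R | ∃ b : Λ →₀ Algebra.adjoin k (Set.range θ),
    Finsupp.linearCombination _ v b = 0 ∧ ∃ l, x = b l}
  have hX : X ⊆ ((⊥ : Submodule k R) : Set R) := by
    refine GradedAlgebra.subset_of_forall_eq_add_sum_mul 𝒜 hd hθ (by simp) ?_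
    rintro _ ⟨b, hb, l, rfl⟩
    obtain ⟨z, hz, rfl⟩ := exists_eq_sum_smul_of_linearCombination_eq_zero hreg hli hspan hb
    exact ⟨0, fun j => z j l, by simp, fun j => ⟨z j, hz j, l, rfl⟩, by simp⟩
  ext l
  simpa using hX ⟨b, hb, l, rfl⟩

end Basis

theorem basis_of_regularSeq_general {k R : Type*} [Field k] [CommRing R] [Algebra k R]
    (𝒜 : ℕ → Submodule k R) [GradedAlgebra 𝒜]
    {r : ℕ} (θ : Fin r → R) (d : Fin r → ℕ)
    (hd : ∀ j, 0 < d j) (hmem : ∀ j, θ j ∈ 𝒜 (d j))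
    (hreg : IsRegularSeq θ)
    {Λ : Type*} (v : Λ → R) (e : Λ → ℕ) (hv : ∀ l, v l ∈ 𝒜 (e l))
    (hli : LinearIndependent k
      fun l => Ideal.Quotient.mk (Ideal.span (Set.range θ)) (v l))
    (hspan : Submodule.span k
      (Set.range fun l => Ideal.Quotient.mk (Ideal.span (Set.range θ)) (v l)) = ⊤) :
    LinearIndependent ↥(Algebra.adjoin k (Set.range θ)) v ∧
      Submodule.span ↥(Algebra.adjoin k (Set.range θ)) (Set.range v) = ⊤ := by
  have hspanA := span_adjoin_eq_top 𝒜 hd hmem hv hspan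
  exact ⟨linearIndependent_adjoin 𝒜 hd hmem hreg hli hspanA, hspanA⟩

/-- If `θ 0, …, θ (r-1)` is a regular sequence of homogeneous positive-degree elements
of an ℕ-graded commutative `k`-algebra `R` (with `R₀ ≅ k`, finitely generated,
finite-dimensional graded pieces), and `(v l)` is a family of homogeneous elements of `R`
whose images in `R/(θ 0, …, θ (r-1))` form a `k`-basis, then `(v l)` is a basis of `R`
as a module over the subalgebra `k[θ 0, …, θ (r-1)]`. -/
theorem basis_of_regularSeq {k R : Type*} [Field k] [CommRing R] [Algebra k R]
    (𝒜 : ℕ → Submodule k R) [GradedAlgebra 𝒜]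
    (hR0 : ∀ x ∈ 𝒜 0, ∃ c : k, x = algebraMap k R c)
    (hfd : ∀ i, FiniteDimensional k (𝒜 i))
    (hfg : Algebra.FiniteType k R)
    {r : ℕ} (θ : Fin r → R) (d : Fin r → ℕ)
    (hd : ∀ j, 0 < d j) (hmem : ∀ j, θ j ∈ 𝒜 (d j))
    (hreg : IsRegularSeq θ)
    {Λ : Type*} (v : Λ → R) (e : Λ → ℕ) (hv : ∀ l, v l ∈ 𝒜 (e l))
    (hli : LinearIndependent k
      fun l => Ideal.Quotient.mk (Ideal.span (Set.range θ)) (v l))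
    (hspan : Submodule.span k
      (Set.range fun l => Ideal.Quotient.mk (Ideal.span (Set.range θ)) (v l)) = ⊤) :
    LinearIndependent ↥(Algebra.adjoin k (Set.range θ)) v ∧
      Submodule.span ↥(Algebra.adjoin k (Set.range θ)) (Set.range v) = ⊤ :=
  basis_of_regularSeq_general 𝒜 θ d hd hmem hreg v e hv hli hspan
end

section
/- Let e₁,…,e_n be the standard basis of ℂⁿ, and let N : ℂⁿ → ℂⁿ be the regular nilpotent Jordan operator defined by N e₁ = 0 and N e_j = e_{j−1} for 2 ≤ j ≤ n. Let h : {1,…,n} → {1,…,n} be a Hessenberg function and let w be a permutation of {1,…,n}. Then N maps span_ℂ{e_{w(1)},…,e_{w(i)}} into span_ℂ{e_{w(1)},…,e_{w(h(i))}} for every i ∈ {1,…,n} if and only if for every i ∈ {1,…,n}, either w(i) = 1 or w⁻¹(w(i) − 1) ≤ h(i). -/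
/-- Hessenberg-variety membership criterion for permutation flags (type A, regular
nilpotent case), in 0-indexed form: `N` is the linear operator on `ℂⁿ` with
`N e₀ = 0` and `N eⱼ = e_{j-1}` for `j ≥ 1` (1-indexed: `N e₁ = 0`, `N eⱼ = e_{j-1}`
for `2 ≤ j ≤ n`), `h` is a Hessenberg function, and `w` a permutation.  Then `N` maps
`span{e_{w 0},…,e_{w i}}` into `span{e_{w 0},…,e_{w (h i)}}` for all `i` iff for all
`i`, either `w i` is the smallest index or `w⁻¹((w i) − 1) ≤ h i`. -/
theorem permFlag_mem_hessenberg_iff (n : ℕ) (hn : 0 < n)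
    (N : (Fin n → ℂ) →ₗ[ℂ] (Fin n → ℂ))
    (hN : ∀ j : Fin n, N (Pi.single j 1) =
      if (j : ℕ) = 0 then 0
      else Pi.single (⟨(j : ℕ) - 1, lt_of_le_of_lt (Nat.sub_le _ _) j.isLt⟩ : Fin n) 1)
    (h : Fin n → Fin n) (hh1 : ∀ i, i ≤ h i) (hh2 : Monotone h)
    (w : Equiv.Perm (Fin n)) :
    (∀ i : Fin n,
        Submodule.map N
            (Submodule.span ℂ ((fun j : Fin n => (Pi.single (w j) 1 : Fin n → ℂ)) ''
              {j | j ≤ i}))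
          ≤ Submodule.span ℂ ((fun j : Fin n => (Pi.single (w j) 1 : Fin n → ℂ)) ''
              {j | j ≤ h i}))
      ↔ ∀ i : Fin n, (w i : ℕ) = 0 ∨
          w.symm ⟨(w i : ℕ) - 1, lt_of_le_of_lt (Nat.sub_le _ _) (w i).isLt⟩ ≤ h i := by

  constructor
  · intro H i
    by_cases h0 : (w i : ℕ) = 0
    · exact Or.inl h0
    right
    by_contra hlt
    push_neg at hlt
    set k : Fin n := ⟨(w i : ℕ) - 1, lt_of_le_of_lt (Nat.sub_le _ _) (w i).isLt⟩ with hk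
    have hmem : (Pi.single k 1 : Fin n → ℂ) ∈
        Submodule.span ℂ ((fun j : Fin n => (Pi.single (w j) 1 : Fin n → ℂ)) ''
          {j | j ≤ h i}) := by
      have h1 : N (Pi.single (w i) 1) ∈
          Submodule.span ℂ ((fun j : Fin n => (Pi.single (w j) 1 : Fin n → ℂ)) ''
            {j | j ≤ h i}) :=
        H i ⟨_, Submodule.subset_span ⟨i, le_refl i, rfl⟩, rfl⟩
      rw [hN, if_neg h0] at h1
      exact h1
    have hker : Submodule.span ℂ ((fun j : Fin n => (Pi.single (w j) 1 : Fin n → ℂ)) ''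
        {j | j ≤ h i}) ≤ LinearMap.ker (LinearMap.proj (R := ℂ) (φ := fun _ : Fin n => ℂ) k) := by
      rw [Submodule.span_le]
      rintro _ ⟨j, hj, rfl⟩
      have hne : w j ≠ k := by
        intro he
        have : j = w.symm k := by rw [← he, Equiv.symm_apply_apply]
        rw [this] at hj
        exact absurd hj (not_le.mpr hlt)
      simp [LinearMap.mem_ker, Pi.single_eq_of_ne (Ne.symm hne)]
    have := hker hmem
    simp [LinearMap.mem_ker] at this
  · intro H i
    rw [Submodule.map_span, Submodule.span_le]
    rintro _ ⟨_, ⟨j, hj, rfl⟩, rfl⟩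
    rw [hN]
    by_cases h0 : (w j : ℕ) = 0
    · rw [if_pos h0]
      exact Submodule.zero_mem _
    · rw [if_neg h0]
      rcases H j with h1 | h2
      · exact absurd h1 h0
      · apply Submodule.subset_span
        refine ⟨w.symm ⟨(w j : ℕ) - 1, lt_of_le_of_lt (Nat.sub_le _ _) (w j).isLt⟩,
          le_trans h2 (hh2 hj), ?_⟩
        simp [Equiv.apply_symm_apply]
end

section
/- Let w be a permutation of {1,…,n}. Then w satisfies: for every i ∈ {1,…,n−1}, either w(i) = 1 or w⁻¹(w(i) − 1) ≤ i + 1, if and only if w is a concatenation of decreasing consecutive blocks; precisely, if and only if there exist an integer m ≥ 0 and integers 0 = j₀ < j₁ < ⋯ < j_m < j_{m+1} = n such that for every q ∈ {0,…,m} and every s with j_q < s ≤ j_{q+1} one has w(s) = j_q + j_{q+1} + 1 − s. -/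
/-!
If `w` maps the positions `< a` to values `< a`, it also maps the positions `≥ a` to values `≥ a`.
For such an `a < n` and `b = w a`, the Peterson condition forces `w` to reverse `[a, b]`: walking
right from `a`, the value `w s - 1` must sit at position `s + 1`, since positions `< a` carry values
`< a` and positions in `[a, s]` already carry larger values. Hence `b + 1` has the same property as
`a`, and iterating from `0` splits `[0, n)` into reversed blocks. Conversely, inside a reversed
block the value `w i - 1` sits at `i + 1`, and at the right end `B` of a block it sits left of `B`,
because positions `≥ B` carry values `≥ B`.
-/

namespace Peterson

open Equiv

variable {n : ℕ}

/-- `w⁻¹ (w i - 1) ≤ i + 1`, stated without truncated subtraction. -/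
def PetersonCondition (w : Perm (Fin n)) : Prop :=
  ∀ i p : Fin n, (i : ℕ) + 1 < n → (w p : ℕ) + 1 = w i → (p : ℕ) ≤ i + 1

theorem petersonCondition_iff (w : Perm (Fin n)) :
    PetersonCondition w ↔ ∀ i : Fin n, (i : ℕ) + 1 < n →
      ((w i : ℕ) = 0 ∨
        ((w.symm ⟨(w i : ℕ) - 1, lt_of_le_of_lt (Nat.sub_le _ _) (w i).isLt⟩ : Fin n) : ℕ)
          ≤ (i : ℕ) + 1) := by
  refine ⟨fun H i hi => or_iff_not_imp_left.2 fun hi0 => H i _ hi ?_, fun H i p hi hp => ?_⟩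
  · rw [Equiv.apply_symm_apply]
    simp only
    omega
  · have hp' : w.symm ⟨(w i : ℕ) - 1, lt_of_le_of_lt (Nat.sub_le _ _) (w i).isLt⟩ = p :=
      w.symm_apply_eq.2 (Fin.ext (by simp only; omega))
    rw [← hp']
    exact (H i hi).resolve_left (by omega)

def StabilizesIio (w : Perm (Fin n)) (a : ℕ) : Prop :=
  ∀ t : Fin n, (t : ℕ) < a → (w t : ℕ) < a

theorem stabilizesIio_zero (w : Perm (Fin n)) : StabilizesIio w 0 :=
  fun _ ht => absurd ht (Nat.not_lt_zero _)

theorem StabilizesIio.le_apply {w : Perm (Fin n)} {a : ℕ} (hw : StabilizesIio w a) {t : Fin n}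
    (ht : a ≤ t) : a ≤ w t := by
  let s : Set (Fin n) := {t | (t : ℕ) < a}
  have hbij : Set.BijOn w s s := (s.toFinite.injOn_iff_bijOn_of_mapsTo hw).1 w.injective.injOn
  exact not_lt.1 ((hbij.compl w.bijective).mapsTo (not_lt.2 ht))

theorem PetersonCondition.apply_eq_of_stabilizesIio {w : Perm (Fin n)} (H : PetersonCondition w)
    {a : ℕ} (hw : StabilizesIio w a) (ha : a < n) {s : Fin n} (has : a ≤ s)
    (hs : (s : ℕ) ≤ w ⟨a, ha⟩) : (w s : ℕ) = a + w ⟨a, ha⟩ - s := by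
  have hab : a ≤ w ⟨a, ha⟩ := hw.le_apply le_rfl
  have hbn : (w ⟨a, ha⟩ : ℕ) < n := (w ⟨a, ha⟩).isLt
  generalize hb : (w ⟨a, ha⟩ : ℕ) = b at hs hab hbn ⊢
  suffices ∀ k, a ≤ k → k ≤ b → ∀ s : Fin n, a ≤ s → (s : ℕ) ≤ k → (w s : ℕ) = a + b - s from
    this s has hs s has le_rfl
  intro k hak
  induction k, hak using Nat.le_induction with
  | base =>
    intro _ s has hs
    obtain rfl : s = ⟨a, ha⟩ := Fin.ext (le_antisymm hs has)
    omega
  | succ k hak ih =>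
    intro hkb s has hs
    rcases (show (s : ℕ) ≤ k ∨ (s : ℕ) = k + 1 by omega) with hsk | hsk
    · exact ih (by omega) s has hsk
    obtain ⟨i, hi⟩ : ∃ i : Fin n, (i : ℕ) = k := ⟨⟨k, by omega⟩, rfl⟩
    have hwi : (w i : ℕ) = a + b - k := hi ▸ ih (by omega) i (by omega) hi.le
    obtain ⟨p, hp⟩ := w.surjective ⟨(w i : ℕ) - 1, by omega⟩
    have hwp : (w p : ℕ) = a + b - k - 1 := by rw [hp]; simp only [hwi]
    have hpa : a ≤ p := by
      by_contra! hpa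
      have := hw p hpa
      omega
    have hpk : k < p := by
      by_contra! hpk
      have := ih (by omega) p hpa hpk
      omega
    have hpi : (p : ℕ) ≤ i + 1 := H i p (by omega) (by omega)
    obtain rfl : s = p := Fin.ext (by omega)
    omega

theorem PetersonCondition.stabilizesIio_apply_add_one {w : Perm (Fin n)}
    (H : PetersonCondition w) {a : ℕ} (hw : StabilizesIio w a) (ha : a < n) :
    StabilizesIio w (w ⟨a, ha⟩ + 1) := by
  intro t ht
  have hab : a ≤ w ⟨a, ha⟩ := hw.le_apply le_rfl
  rcases lt_or_ge (t : ℕ) a with hta | hat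
  · have := hw t hta
    omega
  · have := H.apply_eq_of_stabilizesIio hw ha hat (by omega)
    omega

def ReversesBlocks (w : Perm (Fin n)) {m : ℕ} (j : Fin (m + 1) → ℕ) : Prop :=
  ∀ q : Fin m, ∀ s : Fin n, j q.castSucc ≤ s → (s : ℕ) < j q.succ →
    (w s : ℕ) = j q.castSucc + j q.succ - 1 - s

theorem ReversesBlocks.cons {w : Perm (Fin n)} {m : ℕ} {j : Fin (m + 1) → ℕ}
    (hw : ReversesBlocks w j) {a : ℕ}
    (ha : ∀ s : Fin n, a ≤ s → (s : ℕ) < j 0 → (w s : ℕ) = a + j 0 - 1 - s) :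
    ReversesBlocks w (Fin.cons a j : Fin (m + 2) → ℕ) := by
  intro q
  cases q using Fin.cases with
  | zero => simpa using ha
  | succ q => simpa [← Fin.succ_castSucc] using hw q

theorem PetersonCondition.exists_reversesBlocks {w : Perm (Fin n)} (H : PetersonCondition w)
    {a : ℕ} (hw : StabilizesIio w a) (ha : a < n) :
    ∃ m : ℕ, ∃ j : Fin (m + 2) → ℕ,
      j 0 = a ∧ j (Fin.last (m + 1)) = n ∧ StrictMono j ∧ ReversesBlocks w j := by
  have hab : a < w ⟨a, ha⟩ + 1 := Nat.lt_succ_of_le (hw.le_apply le_rfl)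
  have hblock : ∀ s : Fin n, a ≤ s → (s : ℕ) < w ⟨a, ha⟩ + 1 →
      (w s : ℕ) = a + (w ⟨a, ha⟩ + 1) - 1 - s := fun s has hs => by
    have := H.apply_eq_of_stabilizesIio hw ha has (by omega)
    omega
  rcases Nat.lt_or_eq_of_le (Nat.succ_le_of_lt (w ⟨a, ha⟩).isLt) with hlt | heq
  · obtain ⟨m, j, h0, hl, hj, hjw⟩ :=
      H.exists_reversesBlocks (H.stabilizesIio_apply_add_one hw ha) hlt
    refine ⟨m + 1, Fin.cons a j, rfl, hl, Fin.strictMono_cons.2 ⟨fun q => ?_, hj⟩,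
      hjw.cons (h0 ▸ hblock)⟩
    exact (h0 ▸ hab).trans_le (hj.monotone (Fin.zero_le q))
  · refine ⟨0, Fin.cons a ![n], rfl, rfl, Fin.strictMono_cons.2 ⟨fun _ => ?_, ?_⟩,
      ReversesBlocks.cons (fun q => q.elim0) ?_⟩
    · simpa [← heq] using hab
    · exact Subsingleton.strictMono _
    · simpa [← heq] using hblock
termination_by n - a

theorem exists_castSucc_le_and_lt_succ {m : ℕ} (j : Fin (m + 1) → ℕ) {s : ℕ} (h0 : j 0 ≤ s)
    (hl : s < j (Fin.last m)) : ∃ q : Fin m, j q.castSucc ≤ s ∧ s < j q.succ := by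
  induction m with
  | zero => exact absurd hl (not_lt.2 h0)
  | succ m ih =>
    by_cases hs : s < j (Fin.last m).castSucc
    · obtain ⟨q, hq⟩ := ih (j ∘ Fin.castSucc) h0 hs
      exact ⟨q.castSucc, by rw [Fin.succ_castSucc]; exact hq⟩
    · exact ⟨Fin.last m, not_lt.1 hs, by simpa using hl⟩

theorem ReversesBlocks.le_apply {w : Perm (Fin n)} {m : ℕ} {j : Fin (m + 1) → ℕ}
    (hw : ReversesBlocks w j) (hl : n ≤ j (Fin.last m)) (hj : StrictMono j) (q : Fin (m + 1))
    {s : Fin n} (hs : j q ≤ s) : j q ≤ w s := by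
  obtain ⟨r, hr, hrs⟩ := exists_castSucc_le_and_lt_succ j
    ((hj.monotone (Fin.zero_le q)).trans hs) (s.isLt.trans_le hl)
  have hqr : q ≤ r.castSucc := Fin.le_castSucc_iff.2 (hj.lt_iff_lt.1 (hs.trans_lt hrs))
  have := hw r s hr hrs
  have := hj.monotone hqr
  omega

theorem ReversesBlocks.petersonCondition {w : Perm (Fin n)} {m : ℕ} {j : Fin (m + 1) → ℕ}
    (hw : ReversesBlocks w j) (h0 : j 0 = 0) (hl : j (Fin.last m) = n) (hj : StrictMono j) :
    PetersonCondition w := by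
  intro i p hi hp
  obtain ⟨q, hiq, hqi⟩ := exists_castSucc_le_and_lt_succ j (h0 ▸ Nat.zero_le i) (hl ▸ i.isLt)
  have hwi := hw q i hiq hqi
  rcases lt_or_ge ((i : ℕ) + 1) (j q.succ) with hin | hend
  · obtain ⟨i', hi'⟩ : ∃ i' : Fin n, (i' : ℕ) = i + 1 := ⟨⟨i + 1, hi⟩, rfl⟩
    have hwi' := hw q i' (by omega) (by omega)
    obtain rfl : p = i' := w.injective (Fin.ext (by omega))
    exact hi'.le
  · by_contra! hpi
    have := hw.le_apply hl.ge hj q.succ (s := p) (by omega)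
    omega

end Peterson

open Peterson in
/-- Characterization of `S`-fixed points of the Peterson variety (0-indexed form of the
1-indexed statement).  A permutation `w` of `{0,…,n-1}` satisfies: for every `i` with
`i + 1 < n`, either `w i = 0` or `w⁻¹((w i) − 1) ≤ i + 1`, if and only if `w` is a
concatenation of decreasing consecutive blocks, i.e. there are `m ≥ 0` and
`0 = j₀ < j₁ < ⋯ < j_m < j_{m+1} = n` such that for each block `q` and each position
`s` with `j_q ≤ s < j_{q+1}` one has `w s = j_q + j_{q+1} − 1 − s`. -/
theorem peterson_fixed_point_iff (n : ℕ) (hn : 1 ≤ n) (w : Equiv.Perm (Fin n)) :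
    (∀ i : Fin n, (i : ℕ) + 1 < n →
        ((w i : ℕ) = 0 ∨
          ((w.symm ⟨(w i : ℕ) - 1, lt_of_le_of_lt (Nat.sub_le _ _) (w i).isLt⟩ : Fin n) : ℕ)
            ≤ (i : ℕ) + 1))
      ↔ ∃ m : ℕ, ∃ j : Fin (m + 2) → ℕ,
          j 0 = 0 ∧ j (Fin.last (m + 1)) = n ∧ StrictMono j ∧
          ∀ q : Fin (m + 1), ∀ s : Fin n,
            j q.castSucc ≤ (s : ℕ) → (s : ℕ) < j q.succ →
              (w s : ℕ) = j q.castSucc + j q.succ - 1 - (s : ℕ) := by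
  rw [← petersonCondition_iff]
  refine ⟨fun H => H.exists_reversesBlocks (stabilizesIio_zero w) hn, ?_⟩
  rintro ⟨m, j, h0, hl, hj, hw⟩
  exact ReversesBlocks.petersonCondition hw h0 hl hj
end

section
/- Let n ≥ 2. The set of common solutions (z₁,…,z_{n−1}) ∈ ℂ^{n−1} of the equations z_k(z_k − (1/2)z_{k−1} − (1/2)z_{k+1}) = 0 for k = 1,…,n−1, with the convention z₀ = z_n = 0, consists only of the origin (0,…,0). -/
/-- If `w : ℕ → ℂ` vanishes at `0` and for indices `≥ n`, and each interior value is
the average of its neighbors (whenever nonzero), then `w` is identically zero. -/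
private lemma peterson_aux (n : ℕ) (w : ℕ → ℂ)
    (h0 : ∀ j, j = 0 ∨ n ≤ j → w j = 0)
    (heq : ∀ j, 1 ≤ j → j + 1 ≤ n → w j ≠ 0 →
      w j = (w (j - 1) + w (j + 1)) / 2) :
    ∀ j, w j = 0 := by
  classical
  by_contra hc
  push_neg at hc
  obtain ⟨j1, hj1⟩ := hc
  set s : Finset ℕ := Finset.range (n + 1) with hs
  have hsne : s.Nonempty := ⟨0, by simp [hs]⟩
  set M := s.sup' hsne (fun j => ‖w j‖) with hM
  have hub : ∀ j, ‖w j‖ ≤ M := by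
    intro j
    by_cases hj : j ≤ n
    · exact Finset.le_sup' (fun j => ‖w j‖) (show j ∈ s by rw [hs]; exact Finset.mem_range.mpr (by omega))
    · rw [h0 j (Or.inr (by omega)), norm_zero]
      calc (0 : ℝ) ≤ ‖w 0‖ := norm_nonneg _
        _ ≤ M := Finset.le_sup' (fun j => ‖w j‖) (show 0 ∈ s by rw [hs]; exact Finset.mem_range.mpr (by omega))
  have hMpos : 0 < M := lt_of_lt_of_le (norm_pos_iff.mpr hj1) (hub j1)
  have hex : ∃ j, ‖w j‖ = M := by
    obtain ⟨j, hjm, hj⟩ := Finset.exists_mem_eq_sup' hsne (fun j => ‖w j‖)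
    exact ⟨j, hj.symm⟩
  set j0 := Nat.find hex with hj0def
  have hj0 : ‖w j0‖ = M := Nat.find_spec hex
  have hmin : ∀ i, i < j0 → ‖w i‖ ≠ M := fun i hi => Nat.find_min hex hi
  have hne : w j0 ≠ 0 := by
    intro h; rw [h, norm_zero] at hj0; linarith
  have h1 : 1 ≤ j0 := by
    by_contra h
    exact hne (h0 j0 (Or.inl (by omega)))
  have h2 : j0 + 1 ≤ n := by
    by_contra h
    exact hne (h0 j0 (Or.inr (by omega)))
  have heqj := heq j0 h1 h2 hne
  have hlt : ‖w (j0 - 1)‖ < M :=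
    lt_of_le_of_ne (hub _) (hmin _ (by omega))
  have hle : ‖w (j0 + 1)‖ ≤ M := hub _
  have hbound : ‖w j0‖ ≤ (‖w (j0 - 1)‖ + ‖w (j0 + 1)‖) / 2 := by
    rw [heqj, norm_div]
    have h2' : ‖(2 : ℂ)‖ = 2 := by simp
    rw [h2']
    have := norm_add_le (w (j0 - 1)) (w (j0 + 1))
    linarith
  linarith [hbound, hj0.le, hj0.ge]

/-- For `n ≥ 2`, the set of common solutions `(z₁,…,z_{n-1}) ∈ ℂ^{n-1}` of the
equations `z_k (z_k − (1/2) z_{k-1} − (1/2) z_{k+1}) = 0` for `k = 1,…,n-1` (with the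
convention `z₀ = z_n = 0`; here `z` is 0-indexed, so `z ⟨k-1⟩` is `z_k`) consists only
of the origin. -/
theorem peterson_solutions_eq_zero (n : ℕ) (hn : 2 ≤ n) :
    {z : Fin (n - 1) → ℂ | ∀ k : Fin (n - 1),
        z k * (z k
          - (1/2) * (if 0 < (k : ℕ) then
              z ⟨(k : ℕ) - 1, lt_of_le_of_lt (Nat.sub_le _ _) k.isLt⟩ else 0)
          - (1/2) * (if h : (k : ℕ) + 1 < n - 1 then z ⟨(k : ℕ) + 1, h⟩ else 0)) = 0}
      = {0} := by
  ext z
  simp only [Set.mem_setOf_eq, Set.mem_singleton_iff]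
  constructor
  · intro hz
    set w : ℕ → ℂ := fun j =>
      if h : 1 ≤ j ∧ j ≤ n - 1 then z ⟨j - 1, by omega⟩ else 0 with hw
    have hall : ∀ j, w j = 0 := by
      apply peterson_aux n w
      · intro j hj
        simp only [hw]
        rw [dif_neg]
        omega
      · intro j hj1 hj2 hne
        have hk : j - 1 < n - 1 := by omega
        have hzk := hz ⟨j - 1, hk⟩
        simp only [Fin.val_mk] at hzk
        have e1 : w j = z ⟨j - 1, hk⟩ := by
          simp only [hw]
          rw [dif_pos ⟨hj1, by omega⟩]
        rw [e1] at hne ⊢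
        have hfac : z ⟨j - 1, hk⟩
            - (1/2) * (if 0 < j - 1 then
                z ⟨j - 1 - 1, lt_of_le_of_lt (Nat.sub_le _ _) (Fin.isLt ⟨j - 1, hk⟩)⟩ else 0)
            - (1/2) * (if h : j - 1 + 1 < n - 1 then z ⟨j - 1 + 1, h⟩ else 0) = 0 :=
          (mul_eq_zero.mp hzk).resolve_left hne
        have e2 : (if 0 < j - 1 then
            z ⟨j - 1 - 1, lt_of_le_of_lt (Nat.sub_le _ _) (Fin.isLt ⟨j - 1, hk⟩)⟩ else 0)
            = w (j - 1) := by
          simp only [hw]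
          by_cases hj : 2 ≤ j
          · rw [if_pos (by omega), dif_pos ⟨by omega, by omega⟩]
          · rw [if_neg (by omega), dif_neg (by omega)]
        have e3 : (if h : j - 1 + 1 < n - 1 then z ⟨j - 1 + 1, h⟩ else 0) = w (j + 1) := by
          simp only [hw]
          by_cases hj : j + 1 ≤ n - 1
          · rw [dif_pos (by omega), dif_pos ⟨by omega, hj⟩]
            exact congrArg z (by simp only [Fin.mk.injEq]; omega)
          · rw [dif_neg (by omega), dif_neg (by omega)]
        rw [e2, e3] at hfac
        linear_combination hfac
    funext k
    have hk1 := hall ((k : ℕ) + 1)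
    simp only [hw] at hk1
    rw [dif_pos ⟨by omega, by omega⟩] at hk1
    have : z ⟨(k : ℕ) + 1 - 1, by omega⟩ = z k := by
      exact congrArg z (by ext; simp)
    rw [this] at hk1
    simpa using hk1
  · intro hz k
    subst hz
    simp
end

section
/- Let n ≥ 3 and let a₁,…,a_{n−2}, b₁,…,b_{n−2} be complex numbers; set c_i := a_i b_i for i = 1,…,n−2. For 1 ≤ i ≤ j ≤ n−2 define D(i,j) recursively by D(j,j) := 1 − c_j and D(i,j) := 1 − c_i / D(i+1,j) for i < j (i.e. D(i,j) is the continued fraction 1 − c_i/(1 − c_{i+1}/(⋯/(1 − c_j)))). Assume D(i,j) ≠ 0 for all 1 ≤ i ≤ j ≤ n−2. Then the only solution (z₁,…,z_{n−1}) ∈ ℂ^{n−1} of the system z₁² = b₁ z₁ z₂; z_k² = z_k(a_{k−1} z_{k−1} + b_k z_{k+1}) for 2 ≤ k ≤ n−2; z_{n−1}² = a_{n−2} z_{n−2} z_{n−1}, is the origin (0,…,0). -/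
/-!
Extend `z` by `z 0 = z n = 0`; then every equation reads
`z k ^ 2 = z k * (a (k-1) z (k-1) + b k z (k+1))`. If some `z m ≠ 0`, take the maximal run `z (p+1), …, z (q-1)` of nonzero entries around it, so that
`z p = z q = 0`. Cancelling `z k` turns the run into the tridiagonal linear system
`z k = a (k-1) z (k-1) + b k z (k+1)`, and eliminating from its lower end gives
`a (k-1) z (k-1) = D(k, q-2) z k`. At `k = p + 1` the left side is `0`, so `D(p+1, q-2) z (p+1) = 0`,
contradicting both nonvanishing hypotheses.
-/

/-- The continued fraction `D(i,j) = 1 − c_i/(1 − c_{i+1}/(⋯/(1 − c_j)))`, defined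
recursively by `D(j,j) = 1 − c_j` and `D(i,j) = 1 − c_i / D(i+1,j)` for `i < j`. -/
noncomputable def contFrac (c : ℕ → ℂ) (i j : ℕ) : ℂ :=
  if h : j ≤ i then 1 - c i else 1 - c i / contFrac c (i + 1) j
termination_by j - i
decreasing_by omega

lemma contFrac_self (c : ℕ → ℂ) (j : ℕ) : contFrac c j j = 1 - c j := by
  rw [contFrac, dif_pos le_rfl]

lemma contFrac_of_lt (c : ℕ → ℂ) {i j : ℕ} (h : i < j) :
    contFrac c i j = 1 - c i / contFrac c (i + 1) j := by
  rw [contFrac, dif_neg (Nat.not_le.mpr h)]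

lemma exists_gap_around {P : ℕ → Prop} {p₀ m q₀ : ℕ} (hp₀ : P p₀) (hp₀m : p₀ ≤ m) (hm : ¬P m)
    (hq₀ : P q₀) (hmq₀ : m < q₀) :
    ∃ p q, p₀ ≤ p ∧ p < m ∧ m < q ∧ q ≤ q₀ ∧ P p ∧ P q ∧ ∀ k, p < k → k < q → ¬P k := by
  classical
  have hq : ∃ q, m < q ∧ P q := ⟨q₀, hmq₀, hq₀⟩
  set p := Nat.findGreatest P m
  set q := Nat.find hq
  have hPp : P p := Nat.findGreatest_spec hp₀m hp₀
  have hpm : p < m := lt_of_le_of_ne (Nat.findGreatest_le m) fun h => hm (h ▸ hPp)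
  refine ⟨p, q, Nat.le_findGreatest hp₀m hp₀, hpm, (Nat.find_spec hq).1,
    Nat.find_min' hq ⟨hmq₀, hq₀⟩, hPp, (Nat.find_spec hq).2, fun k hpk hkq hk => ?_⟩
  rcases le_or_gt k m with hkm | hmk
  · exact Nat.findGreatest_is_greatest hpk hkm hk
  · exact Nat.find_min hq hkq ⟨hmk, hk⟩

section Elimination

variable {a b z : ℕ → ℂ}

lemma mul_pred_eq_contFrac_mul {i j : ℕ} (hij : i ≤ j)
    (hz : ∀ k, i ≤ k → k ≤ j + 1 → z k = a (k - 1) * z (k - 1) + b k * z (k + 1))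
    (hj : z (j + 2) = 0)
    (hD : ∀ k, i < k → k ≤ j → contFrac (fun k => a k * b k) k j ≠ 0) :
    a (i - 1) * z (i - 1) = contFrac (fun k => a k * b k) i j * z i := by
  induction hij using Nat.decreasingInduction with
  | self =>
    have hj₁ := hz (j + 1) (by omega) le_rfl
    have hj₀ := hz j le_rfl (by omega)
    simp only [Nat.add_sub_cancel, hj, mul_zero, add_zero] at hj₁
    rw [contFrac_self]
    linear_combination -hj₀ - b j * hj₁
  | of_succ k hkj ih =>
    have hDk : contFrac (fun k => a k * b k) (k + 1) j ≠ 0 := hD (k + 1) (by omega) hkj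
    have hsucc := ih (fun l hl hlj => hz l (by omega) hlj) fun l hl hlj => hD l (by omega) hlj
    simp only [Nat.add_sub_cancel] at hsucc
    have hb : b k * z (k + 1) = a k * b k / contFrac (fun k => a k * b k) (k + 1) j * z k := by
      rw [div_mul_eq_mul_div, eq_div_iff hDk]
      linear_combination -b k * hsucc
    rw [contFrac_of_lt _ hkj]
    linear_combination -hz k le_rfl (by omega) - hb

lemma succ_eq_zero_of_tridiagonal {p q : ℕ} (hpq : p + 1 < q)
    (hz : ∀ k, p < k → k < q → z k = a (k - 1) * z (k - 1) + b k * z (k + 1))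
    (hp : z p = 0) (hq : z q = 0)
    (hD : ∀ i j, p < i → i ≤ j → j + 2 ≤ q → contFrac (fun k => a k * b k) i j ≠ 0) :
    z (p + 1) = 0 := by
  obtain ⟨j, rfl⟩ : ∃ j, q = j + 2 := ⟨q - 2, by omega⟩
  rcases Nat.lt_or_ge j (p + 1) with hjp | hpj
  · obtain rfl : p = j := by omega
    simpa [hp, hq] using hz (p + 1) (by omega) (by omega)
  · have hsucc := mul_pred_eq_contFrac_mul hpj (fun k hk hkj => hz k (by omega) (by omega)) hq
      fun k hk hkj => hD k j (by omega) hkj le_rfl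
    rw [Nat.add_sub_cancel, hp, mul_zero, eq_comm] at hsucc
    exact (mul_eq_zero.mp hsucc).resolve_left (hD (p + 1) j (by omega) hpj le_rfl)

theorem eq_zero_of_sq_eq_mul_of_contFrac_ne_zero {N : ℕ}
    (hD : ∀ i j, 1 ≤ i → i ≤ j → j + 2 ≤ N → contFrac (fun k => a k * b k) i j ≠ 0)
    (h0 : z 0 = 0) (hN : z N = 0)
    (hz : ∀ k, 0 < k → k < N → z k ^ 2 = z k * (a (k - 1) * z (k - 1) + b k * z (k + 1)))
    {m : ℕ} (hm : m ≤ N) : z m = 0 := by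
  by_contra hzm
  obtain ⟨p, q, -, hpm, hmq, hqN, hp, hq, hgap⟩ :=
    exists_gap_around (P := (z · = 0)) h0 (Nat.zero_le m) hzm hN
      (lt_of_le_of_ne hm fun h => hzm (h ▸ hN))
  have hlin : ∀ k, p < k → k < q → z k = a (k - 1) * z (k - 1) + b k * z (k + 1) :=
    fun k hpk hkq => mul_left_cancel₀ (hgap k hpk hkq) <| by
      rw [← pow_two]; exact hz k (by omega) (by omega)
  exact hgap (p + 1) (by omega) (by omega) <| succ_eq_zero_of_tridiagonal (by omega) hlin hp hq
    fun i j hpi hij hjq => hD i j (by omega) hij (by omega)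

end Elimination

/-- Let `n ≥ 3`, let `a₁,…,a_{n-2}, b₁,…,b_{n-2}` be complex numbers and
`c_i = a_i b_i`.  If all the continued fractions `D(i,j)` for `1 ≤ i ≤ j ≤ n-2` are
nonzero, then the only solution `(z₁,…,z_{n-1})` of the system
`z₁² = b₁ z₁ z₂`, `z_k² = z_k (a_{k-1} z_{k-1} + b_k z_{k+1})` for `2 ≤ k ≤ n-2`,
`z_{n-1}² = a_{n-2} z_{n-2} z_{n-1}` is the origin. -/
theorem solutions_eq_zero_of_contFrac_ne_zero (n : ℕ) (hn : 3 ≤ n)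
    (a b : ℕ → ℂ)
    (hD : ∀ i j, 1 ≤ i → i ≤ j → j ≤ n - 2 →
      contFrac (fun i => a i * b i) i j ≠ 0)
    (z : ℕ → ℂ)
    (h1 : z 1 ^ 2 = b 1 * (z 1 * z 2))
    (hmid : ∀ k, 2 ≤ k → k ≤ n - 2 →
      z k ^ 2 = z k * (a (k - 1) * z (k - 1) + b k * z (k + 1)))
    (hlast : z (n - 1) ^ 2 = a (n - 2) * (z (n - 2) * z (n - 1))) :
    ∀ k, 1 ≤ k → k ≤ n - 1 → z k = 0 := by
  intro m hm1 hmn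
  set w : ℕ → ℂ := fun k => if 0 < k ∧ k < n then z k else 0
  have hw_eq : ∀ k, 0 < k → k < n → w k = z k := fun k hk hkn => if_pos ⟨hk, hkn⟩
  have hw0 : w 0 = 0 := if_neg (by omega)
  have hwn : w n = 0 := if_neg (by omega)
  have hsys : ∀ k, 0 < k → k < n → w k ^ 2 = w k * (a (k - 1) * w (k - 1) + b k * w (k + 1)) := by
    intro k hk hkn
    rcases (show k = 1 ∨ (2 ≤ k ∧ k ≤ n - 2) ∨ k = n - 1 by omega) with rfl | ⟨hk2, hkn2⟩ | rfl
    · rw [hw_eq 1 hk hkn, Nat.sub_self, hw0, hw_eq 2 (by omega) (by omega), h1]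
      ring
    · rw [hw_eq k hk hkn, hw_eq (k - 1) (by omega) (by omega), hw_eq (k + 1) (by omega) (by omega)]
      exact hmid k hk2 hkn2
    · rw [Nat.sub_add_cancel (by omega : 1 ≤ n), hwn, Nat.sub_sub, hw_eq (n - 1) hk hkn,
        hw_eq (n - 2) (by omega) (by omega), hlast]
      ring
  rw [← hw_eq m (by omega) (by omega)]
  exact eq_zero_of_sq_eq_mul_of_contFrac_ne_zero (fun i j hi hij hj => hD i j hi hij (by omega))
    hw0 hwn hsys (by omega)
end

section
/- Let n ≥ 2 and let J be the ideal of ℚ[z₁,…,z_{n−1},t] generated by the quadratic polynomials z_k(z_k − (1/2)z_{k−1} − (1/2)z_{k+1} − t) for k = 1,…,n−1, with the convention z₀ = z_n = 0. Then, with the standard total-degree grading (each variable in degree 1), the Hilbert series of ℚ[z₁,…,z_{n−1},t]/J equals (1+q)^{n−1}/(1−q). (The paper states the identity as (1+q²)^{n−1}/(1−q²) with each variable in degree 2, which is obtained from this one by substituting q² for q.) -/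
/-- The Hilbert series of the quotient of the polynomial ring `ℚ[xᵢ : i ∈ σ]` (graded
by total degree, each variable in degree 1) by an ideal `I`: the coefficient of `qˡ` is
the `ℚ`-dimension of the image of the degree-`ℓ` homogeneous component under the
quotient map, i.e. of `Rₗ/(I ∩ Rₗ)`. -/
noncomputable def hilbertSeries {σ : Type*} (I : Ideal (MvPolynomial σ ℚ)) :
    PowerSeries ℚ :=
  PowerSeries.mk fun ℓ =>
    (Module.finrank ℚ
      (Submodule.map (Ideal.Quotient.mkₐ ℚ I).toLinearMap
        (MvPolynomial.homogeneousSubmodule σ ℚ ℓ)) : ℚ)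

/-- The variable `z_k` (1-indexed, `k = 1, …, n-1`) of `ℚ[z₁,…,z_{n-1},t]`, with the
convention `z₀ = z_n = 0`.  The variable `t` is `MvPolynomial.X none`. -/
noncomputable def zVar (n : ℕ) (k : ℕ) : MvPolynomial (Option (Fin (n - 1))) ℚ :=
  if h : 1 ≤ k ∧ k ≤ n - 1 then MvPolynomial.X (some ⟨k - 1, by omega⟩) else 0

/-!
The classes of the monomials `t^(ℓ - |ε|) ∏_{k ∈ ε} z_k` with `ε ⊆ {1, …, n-1}` and `|ε| ≤ ℓ`
form a basis of the degree-`ℓ` part of the quotient; there are `∑_{j ≤ ℓ} C(n-1, j)` of them.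

They span, by induction on the excess `∑ₖ (αₖ - 1)` of `z^α t^c` over being squarefree: modulo
the basis and the monomials of smaller excess, the classes `y_m = z_m · M` of a fixed monomial
`M` satisfy `y_m = 0` or, by the `m`-th generator, `2 y_m = y_{m-1} + y_{m+1}`; together with
`y_0 = y_n = 0` this forces `y = 0`, since inductively `y_m = c y_{m+1}` with `0 ≤ c < 1`.

They are independent: for `S ⊆ {1, …, n-1}` put `t = 1` and `z_k = a_k b_k`, where `a_k`
(resp. `b_k`) counts the consecutive elements of `S` ending (resp. starting) at `k`. On a run of
length `L` this is `i (L + 1 - i)`, whose second difference is `-2`, so the point is a zero of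
`J`, and evaluating the basis at these points is triangular with respect to inclusion.
-/

open MvPolynomial Finset

section MeanValue

variable {K W : Type*} [Field K] [LinearOrder K] [IsStrictOrderedRing K]
  [AddCommGroup W] [Module K W]

theorem exists_eq_smul_succ_of_two_smul_eq_add (y : ℕ → W) (h0 : y 0 = 0)
    (hy : ∀ m, y (m + 1) = 0 ∨ (2 : K) • y (m + 1) = y m + y (m + 2)) (m : ℕ) :
    ∃ c : K, 0 ≤ c ∧ c < 1 ∧ y m = c • y (m + 1) := by
  induction m with
  | zero => exact ⟨0, le_rfl, zero_lt_one, by rw [h0, zero_smul]⟩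
  | succ m ih =>
    obtain ⟨c, hc0, hc1, hc⟩ := ih
    rcases hy m with hzero | hmean
    · exact ⟨0, le_rfl, zero_lt_one, by rw [hzero, zero_smul]⟩
    · refine ⟨(2 - c)⁻¹, inv_nonneg.2 (by linarith), inv_lt_one_of_one_lt₀ (by linarith), ?_⟩
      have hstep : (2 - c) • y (m + 1) = y (m + 2) := by
        rw [sub_smul, hmean, hc, add_sub_cancel_left]
      rw [← hstep, smul_smul, inv_mul_cancel₀ (by linarith), one_smul]

theorem eq_zero_of_two_smul_eq_add (y : ℕ → W) (h0 : y 0 = 0)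
    (hy : ∀ m, y (m + 1) = 0 ∨ (2 : K) • y (m + 1) = y m + y (m + 2))
    (M : ℕ) (hM : ∀ m, M ≤ m → y m = 0) (m : ℕ) : y m = 0 := by
  induction hd : M - m generalizing m with
  | zero => exact hM m (by omega)
  | succ d ih =>
    obtain ⟨c, -, -, hc⟩ := exists_eq_smul_succ_of_two_smul_eq_add y h0 hy m
    rw [hc, ih (m + 1) (by omega), smul_zero]

end MeanValue

theorem linearIndependent_of_triangular {ι K M : Type*} [Finite ι] [PartialOrder ι]
    [CommRing K] [NoZeroDivisors K] [AddCommGroup M] [Module K M]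
    (v : ι → M) (φ : ι → M →ₗ[K] K) (hφ : ∀ i j, φ i (v j) ≠ 0 → j ≤ i)
    (hdiag : ∀ i, φ i (v i) ≠ 0) : LinearIndependent K v := by
  have := Fintype.ofFinite ι
  rw [Fintype.linearIndependent_iff]
  intro g hg i
  induction i using WellFoundedLT.induction with
  | _ i ih =>
  have h := congrArg (φ i) hg
  rw [map_sum, map_zero, Finset.sum_eq_single i] at h
  · simpa [hdiag i] using h
  · intro j _ hji
    by_cases hij : φ i (v j) = 0
    · simp [hij]
    · simp [ih j (lt_of_le_of_ne (hφ i j hij) hji)]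
  · simp

theorem Fintype.card_finset_card_le (α : Type*) [Fintype α] (ℓ : ℕ) :
    Fintype.card {s : Finset α // #s ≤ ℓ} = ∑ j ∈ range (ℓ + 1), (Fintype.card α).choose j := by
  rw [Fintype.card_subtype, card_eq_sum_card_fiberwise (f := Finset.card) (t := range (ℓ + 1))
    fun s hs => mem_range.2 (Nat.lt_succ_of_le (mem_filter.1 hs).2)]
  refine Finset.sum_congr rfl fun j hj => ?_
  rw [← card_univ, ← card_powersetCard, powersetCard_eq_filter, powerset_univ, filter_filter]
  have hjℓ : j ≤ ℓ := Nat.le_of_lt_succ (mem_range.1 hj)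
  exact congrArg _ (filter_congr fun s _ => ⟨And.right, fun h => ⟨h ▸ hjℓ, h⟩⟩)

theorem PowerSeries.coeff_mul_inv_one_sub_X {K : Type*} [Field K] (f : PowerSeries K) (ℓ : ℕ) :
    coeff ℓ (f * (1 - X)⁻¹) = ∑ j ∈ range (ℓ + 1), coeff j f := by
  rw [(PowerSeries.inv_eq_iff_mul_eq_one (by simp)).2 (mk_one_mul_one_sub_eq_one K), coeff_mul,
    Nat.sum_antidiagonal_eq_sum_range_succ_mk]
  simp

theorem PowerSeries.coeff_one_add_X_pow {R : Type*} [CommSemiring R] (N j : ℕ) :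
    coeff j ((1 + X : PowerSeries R) ^ N) = N.choose j := by
  have h : ((1 + Polynomial.X : Polynomial R) : PowerSeries R) = 1 + X := by simp
  rw [← h, ← Polynomial.coe_pow, Polynomial.coeff_coe, Polynomial.coeff_one_add_X_pow]

theorem MvPolynomial.X_mul_monomial {σ R : Type*} [CommSemiring R] (i : σ) (s : σ →₀ ℕ)
    (a : R) : X i * monomial s a = monomial (Finsupp.single i 1 + s) a := by
  rw [monomial_single_add, pow_one]

noncomputable section

namespace Peterson

section Runs

variable (s : Finset ℕ)

def runLeft : ℕ → ℕ
  | 0 => if 0 ∈ s then 1 else 0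
  | k + 1 => if k + 1 ∈ s then runLeft k + 1 else 0

def runRight (k : ℕ) : ℕ :=
  if h : k ∈ s then runRight (k + 1) + 1 else 0
termination_by s.sup id + 1 - k
decreasing_by have := Finset.le_sup (f := id) h; simp only [id] at this; omega

def runProduct (k : ℕ) : ℕ := runLeft s k * runRight s k

variable {s} {k : ℕ}

lemma runRight_eq : runRight s k = if k ∈ s then runRight s (k + 1) + 1 else 0 := by
  rw [runRight]; split_ifs <;> rfl

lemma runLeft_eq_zero (h : k ∉ s) : runLeft s k = 0 := by
  cases k <;> simp [runLeft, h]

lemma runRight_eq_zero (h : k ∉ s) : runRight s k = 0 := by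
  rw [runRight_eq, if_neg h]

lemma runLeft_pos (h : k ∈ s) : 0 < runLeft s k := by
  cases k <;> simp [runLeft, h]

lemma runRight_pos (h : k ∈ s) : 0 < runRight s k := by
  rw [runRight_eq, if_pos h]
  exact Nat.succ_pos _

lemma runProduct_eq_zero_iff : runProduct s k = 0 ↔ k ∉ s := by
  by_cases h : k ∈ s
  · simp [runProduct, h, (runLeft_pos h).ne', (runRight_pos h).ne']
  · simp [runProduct, h, runLeft_eq_zero h]

lemma runProduct_add_runProduct (h : k + 1 ∈ s) :
    runProduct s k + runProduct s (k + 2) + 2 = 2 * runProduct s (k + 1) := by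
  have hl : runLeft s (k + 1) = runLeft s k + 1 := by simp [runLeft, h]
  have hr : runRight s (k + 1) = runRight s (k + 2) + 1 := by rw [runRight_eq, if_pos h]
  have left : runProduct s k = runLeft s k * (runRight s (k + 2) + 2) := by
    by_cases hk : k ∈ s
    · rw [runProduct, runRight_eq, if_pos hk, hr]
    · simp [runProduct, runLeft_eq_zero hk]
  have right : runProduct s (k + 2) = (runLeft s k + 2) * runRight s (k + 2) := by
    by_cases hk : k + 2 ∈ s
    · rw [runProduct, runLeft, if_pos hk, hl]
    · simp [runProduct, runRight_eq_zero hk]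
  rw [left, right, runProduct, hl, hr]
  ring

end Runs

variable {N : ℕ}

def z (N k : ℕ) : MvPolynomial (Option (Fin N)) ℚ :=
  if h : 1 ≤ k ∧ k ≤ N then X (some ⟨k - 1, by omega⟩) else 0

lemma z_succ (k : Fin N) : z N (k + 1) = X (some k) := by
  simp [z, k.isLt]

lemma z_eq_zero {k : ℕ} (h : k = 0 ∨ N < k) : z N k = 0 := by
  rw [z, dif_neg (by omega)]

def generator (N : ℕ) (k : Fin N) : MvPolynomial (Option (Fin N)) ℚ :=
  z N (k + 1) * (z N (k + 1) - C (1 / 2) * z N k - C (1 / 2) * z N (k + 2) - X none)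

def petersonIdeal (N : ℕ) : Ideal (MvPolynomial (Option (Fin N)) ℚ) :=
  Ideal.span (Set.range (generator N))

lemma generator_mul_monomial {γ : Option (Fin N) →₀ ℕ} {k : Fin N} (hk : γ (some k) ≠ 0) :
    generator N k * monomial (γ - Finsupp.single (some k) 1) 1 =
      (z N (k + 1) - C (1 / 2) * z N k - C (1 / 2) * z N (k + 2) - X none) * monomial γ 1 := by
  have hXγ : X (some k) * monomial (γ - Finsupp.single (some k) 1) (1 : ℚ) = monomial γ 1 := by
    rw [X_mul_monomial,
      add_tsub_cancel_of_le (Finsupp.single_le_iff.2 (Nat.one_le_iff_ne_zero.2 hk))]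
  rw [generator, ← hXγ, z_succ]
  ring

section FixedPoints

-- `X (some k)` is `z_{k+1}`, so `shift` moves subsets of `Fin N` to the 1-based positions of `z`.
def shift (S : Finset (Fin N)) : Finset ℕ :=
  S.map (Fin.valEmbedding.trans (addRightEmbedding 1))

lemma succ_mem_shift {S : Finset (Fin N)} {k : Fin N} : (k : ℕ) + 1 ∈ shift S ↔ k ∈ S := by
  simp [shift, Fin.val_inj]

lemma mem_shift {S : Finset (Fin N)} {m : ℕ} (h : m ∈ shift S) : 1 ≤ m ∧ m ≤ N := by
  obtain ⟨k, -, rfl⟩ := Finset.mem_map.1 h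
  simp [Nat.succ_le_of_lt k.isLt]

def fixedPoint (S : Finset (Fin N)) : Option (Fin N) → ℚ :=
  fun o => o.elim 1 fun k => runProduct (shift S) (k + 1)

lemma eval_z (S : Finset (Fin N)) (m : ℕ) :
    eval (fixedPoint S) (z N m) = runProduct (shift S) m := by
  by_cases h : 1 ≤ m ∧ m ≤ N
  · simp [z, h, fixedPoint, Nat.sub_add_cancel h.1]
  · rw [z, dif_neg h, map_zero, eq_comm, Nat.cast_eq_zero, runProduct_eq_zero_iff]
    exact fun hm => h (mem_shift hm)

lemma eval_generator (S : Finset (Fin N)) (k : Fin N) :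
    eval (fixedPoint S) (generator N k) = 0 := by
  simp only [generator, map_mul, map_sub, eval_C, eval_X, eval_z]
  by_cases h : (k : ℕ) + 1 ∈ shift S
  · have hmean : (runProduct (shift S) k + runProduct (shift S) (k + 2) + 2 : ℚ) =
        2 * runProduct (shift S) (k + 1) := by exact_mod_cast runProduct_add_runProduct h
    rw [show fixedPoint S none = 1 from rfl]
    linear_combination (-(runProduct (shift S) (k + 1) : ℚ) / 2) * hmean
  · rw [runProduct_eq_zero_iff.2 h, Nat.cast_zero, zero_mul]

def evalAtFixedPoint (S : Finset (Fin N)) :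
    (MvPolynomial (Option (Fin N)) ℚ ⧸ petersonIdeal N) →ₐ[ℚ] ℚ :=
  Ideal.Quotient.liftₐ _ (aeval (fixedPoint S)) fun _ hp =>
    (Ideal.span_le.2 (Set.range_subset_iff.2 (eval_generator S)) hp : _ ∈ RingHom.ker _)

end FixedPoints

def basisMonomial (ℓ : ℕ) (ε : Finset (Fin N)) : MvPolynomial (Option (Fin N)) ℚ :=
  X none ^ (ℓ - #ε) * ∏ k ∈ ε, X (some k)

lemma isHomogeneous_basisMonomial {ℓ : ℕ} {ε : Finset (Fin N)} (h : #ε ≤ ℓ) :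
    (basisMonomial ℓ ε).IsHomogeneous ℓ := by
  have hprod : (∏ k ∈ ε, X (some k) : MvPolynomial (Option (Fin N)) ℚ).IsHomogeneous
      (∑ _k ∈ ε, 1) := IsHomogeneous.prod _ _ _ fun k _ => isHomogeneous_X ℚ (some k)
  rw [sum_const, smul_eq_mul, mul_one] at hprod
  rw [basisMonomial]
  convert (isHomogeneous_X_pow (none : Option (Fin N)) (ℓ - #ε)).mul hprod
  exact (Nat.sub_add_cancel h).symm

lemma eval_basisMonomial (S : Finset (Fin N)) (ℓ : ℕ) (ε : Finset (Fin N)) :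
    eval (fixedPoint S) (basisMonomial ℓ ε) = ∏ k ∈ ε, (runProduct (shift S) (k + 1) : ℚ) := by
  simp [basisMonomial, fixedPoint]

def basisClass (ℓ : ℕ) (ε : {ε : Finset (Fin N) // #ε ≤ ℓ}) :
    MvPolynomial (Option (Fin N)) ℚ ⧸ petersonIdeal N :=
  Ideal.Quotient.mk _ (basisMonomial ℓ ε)

theorem linearIndependent_basisClass (ℓ : ℕ) :
    LinearIndependent ℚ (basisClass (N := N) ℓ) := by
  have hφ (S : Finset (Fin N)) (ε : {ε : Finset (Fin N) // #ε ≤ ℓ}) :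
      evalAtFixedPoint S (basisClass ℓ ε) = ∏ k ∈ ε.1, (runProduct (shift S) (k + 1) : ℚ) :=
    eval_basisMonomial S ℓ ε
  refine linearIndependent_of_triangular _ (fun S => (evalAtFixedPoint S.1).toLinearMap) ?_ ?_
  · intro S ε h k hk
    rw [AlgHom.toLinearMap_apply, hφ, prod_ne_zero_iff] at h
    simpa [runProduct_eq_zero_iff, succ_mem_shift] using h k hk
  · intro S
    rw [AlgHom.toLinearMap_apply, hφ, prod_ne_zero_iff]
    intro k hk
    simpa [runProduct_eq_zero_iff, succ_mem_shift] using hk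

def excess (α : Option (Fin N) →₀ ℕ) : ℕ := ∑ k, (α (some k) - 1)

lemma excess_single_none_add (α : Option (Fin N) →₀ ℕ) :
    excess (Finsupp.single none 1 + α) = excess α := by
  simp [excess]

lemma excess_single_some_add (α : Option (Fin N) →₀ ℕ) (k : Fin N) :
    excess (Finsupp.single (some k) 1 + α) = excess α + if α (some k) = 0 then 0 else 1 := by
  have hrest : ∑ j ∈ univ.erase k,
        ((Finsupp.single (some k) 1 + α : Option (Fin N) →₀ ℕ) (some j) - 1) =
      ∑ j ∈ univ.erase k, (α (some j) - 1) :=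
    sum_congr rfl fun j hj => by simp [(ne_of_mem_erase hj).symm]
  rw [excess, excess, ← add_sum_erase _ _ (mem_univ k), ← add_sum_erase _ _ (mem_univ k), hrest]
  simp only [Finsupp.add_apply, Finsupp.single_eq_same]
  split_ifs <;> omega

lemma exists_basisMonomial_eq {ℓ : ℕ} {α : Option (Fin N) →₀ ℕ} (hα : α.degree = ℓ)
    (h : excess α = 0) : ∃ ε : Finset (Fin N), #ε ≤ ℓ ∧ monomial α 1 = basisMonomial ℓ ε := by
  have hle : ∀ k, α (some k) ≤ 1 := by
    simpa [excess, sum_eq_zero_iff, Nat.sub_eq_zero_iff_le] using h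
  have hind : ∀ k, α (some k) = if α (some k) ≠ 0 then 1 else 0 := fun k => by
    have := hle k; split_ifs <;> omega
  set ε := univ.filter fun k => α (some k) ≠ 0
  have hcard : ∑ k, α (some k) = #ε := by
    rw [card_filter]; exact sum_congr rfl fun k _ => hind k
  rw [Finsupp.degree_eq_sum, Fintype.sum_option, hcard] at hα
  refine ⟨ε, by omega, ?_⟩
  rw [monomial_eq, C_1, one_mul, Finsupp.prod_fintype _ _ fun _ => pow_zero _,
    Fintype.prod_option, basisMonomial, prod_filter]
  congr 1
  · rw [← hα, Nat.add_sub_cancel]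
  · refine prod_congr rfl fun k _ => ?_
    by_cases hk : α (some k) = 0
    · simp [hk]
    · simp [(hle k).antisymm (Nat.one_le_iff_ne_zero.2 hk)]

def basisSpanComap (N ℓ : ℕ) : Submodule ℚ (MvPolynomial (Option (Fin N)) ℚ) :=
  (Submodule.span ℚ (Set.range (basisClass ℓ))).comap
    (Ideal.Quotient.mkₐ ℚ (petersonIdeal N)).toLinearMap

lemma mem_basisSpanComap_of_mem_petersonIdeal {ℓ : ℕ} {p : MvPolynomial (Option (Fin N)) ℚ}
    (hp : p ∈ petersonIdeal N) : p ∈ basisSpanComap N ℓ := by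
  simp [basisSpanComap, Ideal.Quotient.eq_zero_iff_mem.2 hp]

theorem single_some_add_mem_basisSpanComap {ℓ : ℕ} (γ : Option (Fin N) →₀ ℕ)
    (hγ : γ.degree + 1 = ℓ)
    (ih : ∀ β : Option (Fin N) →₀ ℕ, β.degree = ℓ → excess β ≤ excess γ →
      monomial β 1 ∈ basisSpanComap N ℓ)
    (k : Fin N) :
    monomial (Finsupp.single (some k) 1 + γ) 1 ∈ basisSpanComap N ℓ := by
  set U := basisSpanComap N ℓ
  have hlower (o) (h : excess (Finsupp.single o 1 + γ) ≤ excess γ) : X o * monomial γ 1 ∈ U := by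
    rw [X_mul_monomial]
    exact ih _ (by rw [map_add, Finsupp.degree_single, add_comm, hγ]) h
  let y : ℕ → MvPolynomial (Option (Fin N)) ℚ ⧸ U := fun m => U.mkQ (z N m * monomial γ 1)
  have hy (m : ℕ) : y (m + 1) = 0 ∨ (2 : ℚ) • y (m + 1) = y m + y (m + 2) := by
    rcases lt_or_ge m N with hm | hm
    · obtain ⟨j, rfl⟩ : ∃ j : Fin N, (j : ℕ) = m := ⟨⟨m, hm⟩, rfl⟩
      by_cases hj : γ (some j) = 0
      · refine Or.inl ((Submodule.Quotient.mk_eq_zero _).2 ?_)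
        rw [z_succ]
        exact hlower _ (by rw [excess_single_some_add, if_pos hj, add_zero])
      · right
        have hJ : U.mkQ (generator N j * monomial (γ - Finsupp.single (some j) 1) 1) = 0 :=
          (Submodule.Quotient.mk_eq_zero _).2 <| mem_basisSpanComap_of_mem_petersonIdeal <|
            Ideal.mul_mem_right _ _ (Ideal.subset_span (Set.mem_range_self j))
        have ht : U.mkQ (X none * monomial γ 1) = 0 :=
          (Submodule.Quotient.mk_eq_zero _).2 (hlower none (excess_single_none_add γ).le)
        rw [generator_mul_monomial hj] at hJ
        simp only [sub_mul, C_mul', smul_mul_assoc, map_sub, map_smul, ht, sub_zero] at hJ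
        linear_combination (norm := module) 2 • hJ
    · left
      simp [y, z_eq_zero (Or.inr (Nat.lt_succ_of_le hm))]
  have hyk : U.mkQ (z N (k + 1) * monomial γ 1) = 0 :=
    eq_zero_of_two_smul_eq_add y (by simp [y, z_eq_zero]) hy (N + 1)
      (fun m hm => by simp [y, z_eq_zero (Or.inr hm)]) (k + 1)
  rwa [Submodule.mkQ_apply, Submodule.Quotient.mk_eq_zero, z_succ, X_mul_monomial] at hyk

theorem monomial_mem_basisSpanComap {ℓ : ℕ} (α : Option (Fin N) →₀ ℕ) (hα : α.degree = ℓ) :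
    monomial α 1 ∈ basisSpanComap N ℓ := by
  induction hα' : excess α using Nat.strong_induction_on generalizing α with
  | _ e ih =>
  by_cases h0 : excess α = 0
  · obtain ⟨ε, hε, heq⟩ := exists_basisMonomial_eq hα h0
    rw [heq]
    exact Submodule.subset_span ⟨⟨ε, hε⟩, rfl⟩
  · obtain ⟨j, hj⟩ : ∃ j, 2 ≤ α (some j) := by
      by_contra! hlt
      exact h0 (sum_eq_zero fun k _ => by have := hlt k; omega)
    set γ := α - Finsupp.single (some j) 1
    have hγα : Finsupp.single (some j) 1 + γ = α :=
      add_tsub_cancel_of_le (Finsupp.single_le_iff.2 (by omega))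
    have hγj : γ (some j) ≠ 0 := by simp [γ]; omega
    have hexcess : excess α = excess γ + 1 := by
      rw [← hγα, excess_single_some_add, if_neg hγj]
    rw [← hγα]
    refine single_some_add_mem_basisSpanComap γ ?_ (fun β hβ hle => ih _ (by omega) β hβ rfl) j
    rw [← hα, ← hγα, map_add, Finsupp.degree_single, add_comm]

theorem map_homogeneousSubmodule_eq_span (ℓ : ℕ) :
    (homogeneousSubmodule (Option (Fin N)) ℚ ℓ).map
        (Ideal.Quotient.mkₐ ℚ (petersonIdeal N)).toLinearMap =
      Submodule.span ℚ (Set.range (basisClass ℓ)) := by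
  apply le_antisymm
  · rw [Submodule.map_le_iff_le_comap, homogeneousSubmodule_eq_finsupp_supported,
      AddMonoidAlgebra.supported_eq_span_single, Submodule.span_le]
    rintro _ ⟨α, hα, rfl⟩
    exact monomial_mem_basisSpanComap α hα
  · rw [Submodule.span_le]
    rintro _ ⟨ε, rfl⟩
    exact ⟨_, isHomogeneous_basisMonomial ε.2, rfl⟩

theorem hilbertSeries_petersonIdeal (N : ℕ) :
    hilbertSeries (petersonIdeal N) =
      (1 + PowerSeries.X : PowerSeries ℚ) ^ N * (1 - PowerSeries.X)⁻¹ := by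
  ext ℓ
  rw [hilbertSeries, PowerSeries.coeff_mk, map_homogeneousSubmodule_eq_span,
    finrank_span_eq_card (linearIndependent_basisClass ℓ), Fintype.card_finset_card_le,
    PowerSeries.coeff_mul_inv_one_sub_X]
  simp [PowerSeries.coeff_one_add_X_pow]

end Peterson

end

-- `zVar n` is `Peterson.z (n - 1)` by definition.
theorem hilbertSeries_peterson_equivariant_general (n : ℕ) :
    hilbertSeries
        (Ideal.span (Set.range fun k : Fin (n - 1) =>
          zVar n ((k : ℕ) + 1) *
            (zVar n ((k : ℕ) + 1) - MvPolynomial.C (1/2 : ℚ) * zVar n (k : ℕ)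
              - MvPolynomial.C (1/2 : ℚ) * zVar n ((k : ℕ) + 2) - MvPolynomial.X none)))
      = (1 + (PowerSeries.X : PowerSeries ℚ)) ^ (n - 1) *
          (1 - (PowerSeries.X : PowerSeries ℚ))⁻¹ :=
  Peterson.hilbertSeries_petersonIdeal (n - 1)

/-- For `n ≥ 2`, the Hilbert series of `ℚ[z₁,…,z_{n-1},t]/J`, where `J` is generated
by the quadratics `z_k (z_k − (1/2) z_{k-1} − (1/2) z_{k+1} − t)` for `k = 1,…,n-1`
(with `z₀ = z_n = 0`), equals `(1 + q)^{n-1}/(1 − q)`. -/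
theorem hilbertSeries_peterson_equivariant (n : ℕ) (hn : 2 ≤ n) :
    hilbertSeries
        (Ideal.span (Set.range fun k : Fin (n - 1) =>
          zVar n ((k : ℕ) + 1) *
            (zVar n ((k : ℕ) + 1) - MvPolynomial.C (1/2 : ℚ) * zVar n (k : ℕ)
              - MvPolynomial.C (1/2 : ℚ) * zVar n ((k : ℕ) + 2) - MvPolynomial.X none)))
      = (1 + (PowerSeries.X : PowerSeries ℚ)) ^ (n - 1) *
          (1 - (PowerSeries.X : PowerSeries ℚ))⁻¹ :=
  hilbertSeries_peterson_equivariant_general n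
end
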